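/- arXiv:1204.0568 — 4 statements merged into one kernel-verified Lean document; each statement's English description precedes it below -/
import Mathlib

section
/- Let σ > 0, g > 0 and T ∈ ℝ, and define P(s) = σ² g e^{σ²(T−s)} / (σ² + g(e^{σ²(T−s)} − 1)) for s ≤ T. Then for every s ≤ T the denominator σ² + g(e^{σ²(T−s)} − 1) is strictly positive, P(T) = g, and P is differentiable on (−∞, T] with P'(s) = P(s)² − σ² P(s) for all s ≤ T. -/
/-- The explicit solution of the scalar Riccati equation `P' = P² - σ²P`,
`P(T) = g`, from Example 2.1 of the paper. -/
noncomputable def riccatiP (σ g T s : ℝ) : ℝ :=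
  σ ^ 2 * g * Real.exp (σ ^ 2 * (T - s)) / (σ ^ 2 + g * (Real.exp (σ ^ 2 * (T - s)) - 1))

/-- For `σ > 0`, `g > 0`: the denominator is strictly positive for
`s ≤ T`, `P(T) = g`, and `P` is differentiable on `(-∞, T]` with
`P'(s) = P(s)² - σ² P(s)` there. -/
theorem statement5 (σ g T : ℝ) (hσ : 0 < σ) (hg : 0 < g) :
    (∀ s ≤ T, 0 < σ ^ 2 + g * (Real.exp (σ ^ 2 * (T - s)) - 1)) ∧
    riccatiP σ g T T = g ∧
    ∀ s ≤ T,
      HasDerivWithinAt (riccatiP σ g T)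
        (riccatiP σ g T s ^ 2 - σ ^ 2 * riccatiP σ g T s) (Set.Iic T) s := by
  have hpos : ∀ s ≤ T, 0 < σ ^ 2 + g * (Real.exp (σ ^ 2 * (T - s)) - 1) := by
    intro s hs
    have h1 : (1 : ℝ) ≤ Real.exp (σ ^ 2 * (T - s)) := by
      rw [← Real.exp_zero]
      exact Real.exp_le_exp.mpr (mul_nonneg (sq_nonneg σ) (by linarith))
    have : 0 ≤ g * (Real.exp (σ ^ 2 * (T - s)) - 1) := by
      apply mul_nonneg hg.le; linarith
    have := pow_pos hσ 2
    linarith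
  refine ⟨hpos, ?_, ?_⟩
  · simp [riccatiP]
    field_simp
  · intro s hs
    set E := Real.exp (σ ^ 2 * (T - s)) with hE
    have hD : σ ^ 2 + g * (E - 1) ≠ 0 := (hpos s hs).ne'
    have hexp : HasDerivAt (fun x => Real.exp (σ ^ 2 * (T - x))) (E * (σ ^ 2 * (-1))) s := by
      exact (((hasDerivAt_id s).const_sub T).const_mul (σ ^ 2)).exp
    have hnum : HasDerivAt (fun x => σ ^ 2 * g * Real.exp (σ ^ 2 * (T - x)))
        (σ ^ 2 * g * (E * (σ ^ 2 * (-1)))) s := hexp.const_mul _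
    have hden : HasDerivAt (fun x => σ ^ 2 + g * (Real.exp (σ ^ 2 * (T - x)) - 1))
        (g * (E * (σ ^ 2 * (-1)))) s := ((hexp.sub_const 1).const_mul g).const_add _
    have hdiv := hnum.div hden hD
    have heq : (σ ^ 2 * g * (E * (σ ^ 2 * (-1))) * (σ ^ 2 + g * (E - 1)) -
        σ ^ 2 * g * E * (g * (E * (σ ^ 2 * (-1))))) / (σ ^ 2 + g * (E - 1)) ^ 2 =
        riccatiP σ g T s ^ 2 - σ ^ 2 * riccatiP σ g T s := by
      simp only [riccatiP, ← hE]
      field_simp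
      ring
    rw [heq] at hdiv
    exact hdiv.hasDerivWithinAt
end

section
/- Let n, m ≥ 1, let R be a real symmetric positive definite m×m matrix, let B, B₁ be real n×m matrices and A₁ a real n×n matrix. For every real symmetric positive semidefinite n×n matrix p, the matrix R + B₁ᵀ p B₁ is positive definite (hence invertible); define Γ(p) = (R + B₁ᵀ p B₁)⁻¹ (Bᵀ p + B₁ᵀ p A₁). Assume L := sup { ‖Γ(p)‖ : p real symmetric positive semidefinite n×n } < ∞. Then there exists a constant K > 0 such that ‖Γ(p₁) − Γ(p₂)‖ ≤ K ‖p₁ − p₂‖ for all real symmetric positive semidefinite n×n matrices p₁, p₂. -/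
open Matrix

/-- The operator norm of a (rectangular) real matrix induced by the Euclidean norms. -/
noncomputable def euclideanOpNorm {n m : ℕ} (M : Matrix (Fin n) (Fin m) ℝ) : ℝ :=
  ‖LinearMap.toContinuousLinearMap (Matrix.toEuclideanLin M)‖

/-- The feedback gain `Γ(p) = (R + B₁ᵀ p B₁)⁻¹ (Bᵀ p + B₁ᵀ p A₁)` of the
Riccati–Volterra system. -/
noncomputable def feedbackGain {n m : ℕ} (R : Matrix (Fin m) (Fin m) ℝ)
    (B B₁ : Matrix (Fin n) (Fin m) ℝ) (A₁ : Matrix (Fin n) (Fin n) ℝ)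
    (p : Matrix (Fin n) (Fin n) ℝ) : Matrix (Fin m) (Fin n) ℝ :=
  (R + B₁ᵀ * p * B₁)⁻¹ * (Bᵀ * p + B₁ᵀ * p * A₁)

/-!
Write `M(p) = R + B₁ᵀ p B₁` and `N(p) = Bᵀ p + B₁ᵀ p A₁`, so that `Γ(p) = M(p)⁻¹ N(p)`.
Since `M(p) ≥ R` and the quadratic form of `R` is bounded below by `c ‖x‖²` on the (compact)
unit sphere, `‖M(p)⁻¹‖ ≤ c⁻¹` uniformly in `p`. The identity
`Γ(p₁) - Γ(p₂) = M(p₁)⁻¹ (N(p₁) - N(p₂) - (M(p₁) - M(p₂)) Γ(p₂))` has a right-hand side linear in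
`p₁ - p₂`, and the bound `‖Γ(p₂)‖ ≤ L` controls its last term.
-/

open scoped Matrix.Norms.L2Operator RealInnerProductSpace NNReal

theorem ContinuousLinearMap.exists_pos_mul_le_inner_map_self {E : Type*} [NormedAddCommGroup E]
    [InnerProductSpace ℝ E] [FiniteDimensional ℝ E] (T : E →L[ℝ] E)
    (hT : ∀ x ≠ 0, 0 < ⟪T x, x⟫) : ∃ c : ℝ≥0, 0 < c ∧ ∀ x, ‖x‖ ^ 2 * c ≤ ⟪T x, x⟫ := by
  obtain ⟨c, hc, hsphere⟩ := (isCompact_sphere (0 : E) 1).exists_forall_le'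
    (T.continuous.inner continuous_id).continuousOn
    fun x hx => hT x (ne_zero_of_mem_unit_sphere ⟨x, hx⟩)
  refine ⟨⟨c, hc.le⟩, hc, fun x => ?_⟩
  rcases eq_or_ne x 0 with rfl | hx
  · simp
  have hx₀ : 0 < ‖x‖ := norm_pos_iff.mpr hx
  have hunit := hsphere (‖x‖⁻¹ • x) (by simp [norm_smul, hx₀.ne'])
  simp only [map_smul, id_eq, real_inner_smul_left, real_inner_smul_right] at hunit
  change ‖x‖ ^ 2 * c ≤ _
  rw [← le_div_iff₀' (by positivity)]
  calc c ≤ ‖x‖⁻¹ * (‖x‖⁻¹ * ⟪T x, x⟫) := hunit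
    _ = ⟪T x, x⟫ / ‖x‖ ^ 2 := by field_simp

theorem Matrix.l2_opNorm_mul_mul_le {𝕜 ι κ μ ν : Type*} [RCLike 𝕜] [Fintype ι] [Fintype κ]
    [Fintype μ] [Fintype ν] [DecidableEq κ] [DecidableEq μ] [DecidableEq ν]
    (A : Matrix ι κ 𝕜) (B : Matrix κ μ 𝕜) (C : Matrix μ ν 𝕜) :
    ‖A * B * C‖ ≤ ‖A‖ * ‖B‖ * ‖C‖ :=
  (l2_opNorm_mul _ _).trans (mul_le_mul_of_nonneg_right (l2_opNorm_mul _ _) (norm_nonneg _))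

section

variable {ι : Type*} [Fintype ι] [DecidableEq ι]

theorem Matrix.inv_mul_sub_inv_mul {κ K : Type*} [CommRing K] {M₁ M₂ : Matrix ι ι K}
    (h₁ : IsUnit M₁.det) (h₂ : IsUnit M₂.det) (N₁ N₂ : Matrix ι κ K) :
    M₁⁻¹ * N₁ - M₂⁻¹ * N₂ = M₁⁻¹ * (N₁ - N₂ - (M₁ - M₂) * (M₂⁻¹ * N₂)) := by
  rw [Matrix.sub_mul, ← Matrix.mul_assoc M₂, mul_nonsing_inv _ h₂, Matrix.one_mul,
    Matrix.mul_sub, Matrix.mul_sub, Matrix.mul_sub, ← Matrix.mul_assoc M₁⁻¹ M₁,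
    nonsing_inv_mul _ h₁, Matrix.one_mul]
  abel

theorem Matrix.l2_opNorm_inv_le_of_antilipschitz {𝕜 : Type*} [RCLike 𝕜] {M : Matrix ι ι 𝕜}
    (hM : IsUnit M.det) {K : ℝ≥0} (hK : AntilipschitzWith K (toEuclideanCLM (𝕜 := 𝕜) M)) :
    ‖M⁻¹‖ ≤ K := by
  refine ContinuousLinearMap.opNorm_le_bound _ K.coe_nonneg fun x => ?_
  calc ‖toEuclideanCLM (𝕜 := 𝕜) M⁻¹ x‖
      ≤ K * ‖toEuclideanCLM (𝕜 := 𝕜) M (toEuclideanCLM (𝕜 := 𝕜) M⁻¹ x)‖ :=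
        hK.le_mul_norm (map_zero _) _
    _ = K * ‖x‖ := by
        rw [← mul_apply_eq_comp, ← map_mul, mul_nonsing_inv _ hM, map_one, one_apply_eq_self]

theorem Matrix.inner_toEuclideanCLM_self (M : Matrix ι ι ℝ) (x : EuclideanSpace ℝ ι) :
    ⟪toEuclideanCLM (𝕜 := ℝ) M x, x⟫ = x.ofLp ⬝ᵥ (M *ᵥ x.ofLp) := by
  rw [EuclideanSpace.inner_eq_star_dotProduct]
  rfl

theorem Matrix.PosDef.exists_forall_l2_opNorm_inv_add_le {R : Matrix ι ι ℝ} (hR : R.PosDef) :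
    ∃ C : ℝ, ∀ Q : Matrix ι ι ℝ, Q.PosSemidef → ‖(R + Q)⁻¹‖ ≤ C := by
  obtain ⟨c, hc, hcoercive⟩ := (toEuclideanCLM (𝕜 := ℝ) R).exists_pos_mul_le_inner_map_self
    fun x hx => by
      rw [Matrix.inner_toEuclideanCLM_self]
      exact hR.dotProduct_mulVec_pos (by simpa using hx)
  refine ⟨((c⁻¹ : ℝ≥0) : ℝ), fun Q hQ => Matrix.l2_opNorm_inv_le_of_antilipschitz ?_
    (ContinuousLinearMap.antilipschitz_of_forall_le_inner_map _ hc fun x => ?_)⟩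
  · exact isUnit_iff_ne_zero.mpr (hR.add_posSemidef hQ).det_pos.ne'
  · have hQx : 0 ≤ ⟪toEuclideanCLM (𝕜 := ℝ) Q x, x⟫ := by
      rw [Matrix.inner_toEuclideanCLM_self]
      exact hQ.dotProduct_mulVec_nonneg _
    calc ‖x‖ ^ 2 * c ≤ ⟪toEuclideanCLM (𝕜 := ℝ) R x, x⟫ := hcoercive x
      _ ≤ ⟪toEuclideanCLM (𝕜 := ℝ) (R + Q) x, x⟫ := by
          rw [map_add, _root_.add_apply, inner_add_left]
          linarith
      _ ≤ ‖⟪toEuclideanCLM (𝕜 := ℝ) (R + Q) x, x⟫‖ := le_abs_self _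

end

section FeedbackGain

variable {n m : ℕ} {R : Matrix (Fin m) (Fin m) ℝ} {B B₁ : Matrix (Fin n) (Fin m) ℝ}
  {A₁ p₁ p₂ : Matrix (Fin n) (Fin n) ℝ}

theorem feedbackGain_sub (h₁ : IsUnit (R + B₁ᵀ * p₁ * B₁).det)
    (h₂ : IsUnit (R + B₁ᵀ * p₂ * B₁).det) :
    feedbackGain R B B₁ A₁ p₁ - feedbackGain R B B₁ A₁ p₂ =
      (R + B₁ᵀ * p₁ * B₁)⁻¹ * (Bᵀ * (p₁ - p₂) + B₁ᵀ * (p₁ - p₂) * A₁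
        - B₁ᵀ * (p₁ - p₂) * B₁ * feedbackGain R B B₁ A₁ p₂) := by
  rw [feedbackGain, feedbackGain, Matrix.inv_mul_sub_inv_mul h₁ h₂, ← feedbackGain]
  congr 1
  simp only [Matrix.mul_sub, Matrix.sub_mul, Matrix.add_mul]
  abel

theorem norm_feedbackGain_sub_le (h₁ : IsUnit (R + B₁ᵀ * p₁ * B₁).det)
    (h₂ : IsUnit (R + B₁ᵀ * p₂ * B₁).det) {C L : ℝ} (hC : ‖(R + B₁ᵀ * p₁ * B₁)⁻¹‖ ≤ C)
    (hL : ‖feedbackGain R B B₁ A₁ p₂‖ ≤ L) :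
    ‖feedbackGain R B B₁ A₁ p₁ - feedbackGain R B B₁ A₁ p₂‖ ≤
      C * (‖Bᵀ‖ + ‖B₁ᵀ‖ * ‖A₁‖ + ‖B₁ᵀ‖ * ‖B₁‖ * L) * ‖p₁ - p₂‖ := by
  set d := p₁ - p₂
  have hN : ‖Bᵀ * d + B₁ᵀ * d * A₁ - B₁ᵀ * d * B₁ * feedbackGain R B B₁ A₁ p₂‖ ≤
      (‖Bᵀ‖ + ‖B₁ᵀ‖ * ‖A₁‖ + ‖B₁ᵀ‖ * ‖B₁‖ * L) * ‖d‖ := by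
    have hBd := Matrix.l2_opNorm_mul Bᵀ d
    have hB₁dA₁ := Matrix.l2_opNorm_mul_mul_le B₁ᵀ d A₁
    have hB₁dB₁Γ : ‖B₁ᵀ * d * B₁ * feedbackGain R B B₁ A₁ p₂‖ ≤ ‖B₁ᵀ‖ * ‖d‖ * ‖B₁‖ * L :=
      (Matrix.l2_opNorm_mul _ _).trans (mul_le_mul (Matrix.l2_opNorm_mul_mul_le _ _ _) hL
        (norm_nonneg _) (by positivity))
    calc _ ≤ ‖Bᵀ * d‖ + ‖B₁ᵀ * d * A₁‖ + ‖B₁ᵀ * d * B₁ * feedbackGain R B B₁ A₁ p₂‖ :=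
          (norm_sub_le _ _).trans (by gcongr; exact norm_add_le _ _)
      _ ≤ _ := by linarith
  rw [feedbackGain_sub h₁ h₂, mul_assoc]
  exact (Matrix.l2_opNorm_mul _ _).trans
    (mul_le_mul hC hN (norm_nonneg _) ((norm_nonneg _).trans hC))

end FeedbackGain

theorem statement15_general (n m : ℕ)
    (R : Matrix (Fin m) (Fin m) ℝ) (hRpd : R.PosDef)
    (B B₁ : Matrix (Fin n) (Fin m) ℝ) (A₁ : Matrix (Fin n) (Fin n) ℝ)
    (L : ℝ)
    (hL : ∀ p : Matrix (Fin n) (Fin n) ℝ, p.IsSymm → p.PosSemidef →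
      euclideanOpNorm (feedbackGain R B B₁ A₁ p) ≤ L) :
    (∀ p : Matrix (Fin n) (Fin n) ℝ, p.IsSymm → p.PosSemidef →
      (R + B₁ᵀ * p * B₁).PosDef) ∧
    ∃ K : ℝ, 0 < K ∧
      ∀ p₁ p₂ : Matrix (Fin n) (Fin n) ℝ,
        p₁.IsSymm → p₁.PosSemidef → p₂.IsSymm → p₂.PosSemidef →
        euclideanOpNorm (feedbackGain R B B₁ A₁ p₁ - feedbackGain R B B₁ A₁ p₂)
          ≤ K * euclideanOpNorm (p₁ - p₂) := by
  have hconj : ∀ p : Matrix (Fin n) (Fin n) ℝ, p.PosSemidef → (B₁ᵀ * p * B₁).PosSemidef :=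
    fun p hp => by simpa using hp.conjTranspose_mul_mul_same B₁
  have hposDef : ∀ p : Matrix (Fin n) (Fin n) ℝ, p.PosSemidef → (R + B₁ᵀ * p * B₁).PosDef :=
    fun p hp => hRpd.add_posSemidef (hconj p hp)
  have hdet : ∀ p : Matrix (Fin n) (Fin n) ℝ, p.PosSemidef → IsUnit (R + B₁ᵀ * p * B₁).det :=
    fun p hp => isUnit_iff_ne_zero.mpr (hposDef p hp).det_pos.ne'
  obtain ⟨C, hC⟩ := hRpd.exists_forall_l2_opNorm_inv_add_le
  set K := C * (‖Bᵀ‖ + ‖B₁ᵀ‖ * ‖A₁‖ + ‖B₁ᵀ‖ * ‖B₁‖ * L)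
  refine ⟨fun p _ hp => hposDef p hp, max K 1, by positivity, fun p₁ p₂ _ hp₁ hs₂ hp₂ => ?_⟩
  calc ‖feedbackGain R B B₁ A₁ p₁ - feedbackGain R B B₁ A₁ p₂‖
      ≤ K * ‖p₁ - p₂‖ :=
        norm_feedbackGain_sub_le (hdet p₁ hp₁) (hdet p₂ hp₂) (hC _ (hconj p₁ hp₁)) (hL p₂ hs₂ hp₂)
    _ ≤ max K 1 * ‖p₁ - p₂‖ := by gcongr; exact le_max_left _ _

/-- With `R` symmetric positive definite: for every symmetric
positive semidefinite `p` the matrix `R + B₁ᵀ p B₁` is positive definite, and if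
`Γ` is bounded (in Euclidean operator norm) by `L` over all symmetric positive
semidefinite `p`, then `Γ` is Lipschitz on that set: there is `K > 0` with
`‖Γ(p₁) - Γ(p₂)‖ ≤ K ‖p₁ - p₂‖`. -/
theorem statement15 (n m : ℕ) (hn : 1 ≤ n) (hm : 1 ≤ m)
    (R : Matrix (Fin m) (Fin m) ℝ) (hRs : R.IsSymm) (hRpd : R.PosDef)
    (B B₁ : Matrix (Fin n) (Fin m) ℝ) (A₁ : Matrix (Fin n) (Fin n) ℝ)
    (L : ℝ)
    (hL : ∀ p : Matrix (Fin n) (Fin n) ℝ, p.IsSymm → p.PosSemidef →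
      euclideanOpNorm (feedbackGain R B B₁ A₁ p) ≤ L) :
    (∀ p : Matrix (Fin n) (Fin n) ℝ, p.IsSymm → p.PosSemidef →
      (R + B₁ᵀ * p * B₁).PosDef) ∧
    ∃ K : ℝ, 0 < K ∧
      ∀ p₁ p₂ : Matrix (Fin n) (Fin n) ℝ,
        p₁.IsSymm → p₁.PosSemidef → p₂.IsSymm → p₂.PosSemidef →
        euclideanOpNorm (feedbackGain R B B₁ A₁ p₁ - feedbackGain R B B₁ A₁ p₂)
          ≤ K * euclideanOpNorm (p₁ - p₂) :=
  statement15_general n m R hRpd B B₁ A₁ L hL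
end

section
/- Let t̄ < T be real numbers, β ∈ (0,1), λ ∈ ℝ, ρ > 0, let ν : [t̄, T] → (0,∞) be continuous and Γ : [t̄, T] → [0,∞) be continuous. Then ∫_{t̄}^T e^{λ(s−t̄)} ν(s) ( Γ(s) e^{−∫_{t̄}^s Γ(τ) dτ} )^β ds + e^{λ(T−t̄)} ρ e^{−β ∫_{t̄}^T Γ(τ) dτ} ≤ ( ∫_{t̄}^T e^{(λ/(1−β))(s−t̄)} ν(s)^{1/(1−β)} ds + e^{(λ/(1−β))(T−t̄)} ρ^{1/(1−β)} )^{1−β}. -/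
/-!
Write the integrand as `u ^ (1 - β) * v ^ β` with `u = e^{λ(s-t̄)/(1-β)} ν^{1/(1-β)}` and
`v = Γ e^{-∫_{t̄}^s Γ}`, and the boundary term likewise as `B ^ (1 - β) * w ^ β` with
`B = e^{λ(T-t̄)/(1-β)} ρ^{1/(1-β)}` and `w = e^{-∫_{t̄}^T Γ}`. Hölder's inequality with exponents `1 - β`, `β` on `[t̄, T]` and then once
more for the two-point sum bounds the left side by `(∫ u + B) ^ (1 - β) * (∫ v + w) ^ β`, and
`∫ v + w = 1` because `v` is the derivative of `-e^{-∫_{t̄}^s Γ}`.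
-/

open MeasureTheory Set Real

theorem MeasureTheory.Integrable.memLp_rpow {α : Type*} [MeasurableSpace α] {μ : Measure α}
    {f : α → ℝ} (hf : Integrable f μ) (hf0 : 0 ≤ᵐ[μ] f) {p : ℝ} (hp : 0 < p) :
    MemLp (fun x => f x ^ p) (ENNReal.ofReal (1 / p)) μ := by
  have h := (memLp_norm_rpow_iff hf.aestronglyMeasurable (q := ENNReal.ofReal p)
    (by simpa using hp) ENNReal.ofReal_ne_top).2 (memLp_one_iff_integrable.2 hf)
  rw [ENNReal.toReal_ofReal hp.le, ← ENNReal.ofReal_one, ← ENNReal.ofReal_div_of_pos hp] at h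
  refine h.ae_eq ?_
  filter_upwards [hf0] with x hx
  rw [Real.norm_of_nonneg hx]

theorem MeasureTheory.integral_rpow_mul_rpow_le {α : Type*} [MeasurableSpace α] {μ : Measure α}
    {f g : α → ℝ} (hf : Integrable f μ) (hg : Integrable g μ) (hf0 : 0 ≤ᵐ[μ] f)
    (hg0 : 0 ≤ᵐ[μ] g) {p q : ℝ} (hp : 0 < p) (hq : 0 < q) (hpq : p + q = 1) :
    ∫ x, f x ^ p * g x ^ q ∂μ ≤ (∫ x, f x ∂μ) ^ p * (∫ x, g x ∂μ) ^ q := by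
  have hpq' : HolderConjugate (1 / p) (1 / q) := by
    simpa only [one_div] using HolderConjugate.inv_inv hp hq hpq
  have rpow_rpow_inv : ∀ {h : α → ℝ} {r : ℝ}, 0 < r → 0 ≤ᵐ[μ] h →
      ∫ x, (h x ^ r) ^ (1 / r) ∂μ = ∫ x, h x ∂μ := fun hr hh0 =>
    integral_congr_ae <| by
      filter_upwards [hh0] with x hx
      rw [← rpow_mul hx, mul_one_div_cancel hr.ne', rpow_one]
  have H := integral_mul_le_Lp_mul_Lq_of_nonneg hpq'
    (hf0.mono fun x hx => rpow_nonneg hx p) (hg0.mono fun x hx => rpow_nonneg hx q)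
    (hf.memLp_rpow hf0 hp) (hg.memLp_rpow hg0 hq)
  rwa [rpow_rpow_inv hp hf0, rpow_rpow_inv hq hg0, one_div_one_div, one_div_one_div] at H

/-- Hölder's inequality for the counting measure on `Bool`. -/
theorem rpow_mul_rpow_add_rpow_mul_rpow_le {a b c d p q : ℝ} (ha : 0 ≤ a) (hb : 0 ≤ b)
    (hc : 0 ≤ c) (hd : 0 ≤ d) (hp : 0 < p) (hq : 0 < q) (hpq : p + q = 1) :
    a ^ p * b ^ q + c ^ p * d ^ q ≤ (a + c) ^ p * (b + d) ^ q := by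
  have H := integral_rpow_mul_rpow_le (μ := Measure.count) (f := fun i : Bool => cond i a c)
    (g := fun i => cond i b d) Integrable.of_finite Integrable.of_finite
    (Filter.Eventually.of_forall fun i => by cases i <;> assumption)
    (Filter.Eventually.of_forall fun i => by cases i <;> assumption) hp hq hpq
  simpa [integral_fintype, add_comm] using H

theorem intervalIntegral.integral_rpow_mul_rpow_le {f g : ℝ → ℝ} {a b p q : ℝ} (hab : a ≤ b)
    (hf : IntervalIntegrable f volume a b) (hg : IntervalIntegrable g volume a b)
    (hf0 : ∀ x ∈ Icc a b, 0 ≤ f x) (hg0 : ∀ x ∈ Icc a b, 0 ≤ g x)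
    (hp : 0 < p) (hq : 0 < q) (hpq : p + q = 1) :
    ∫ x in a..b, f x ^ p * g x ^ q ≤ (∫ x in a..b, f x) ^ p * (∫ x in a..b, g x) ^ q := by
  simp only [intervalIntegral.integral_of_le hab]
  exact MeasureTheory.integral_rpow_mul_rpow_le hf.1 hg.1
    (ae_restrict_of_forall_mem measurableSet_Ioc fun x hx => hf0 x (Ioc_subset_Icc_self hx))
    (ae_restrict_of_forall_mem measurableSet_Ioc fun x hx => hg0 x (Ioc_subset_Icc_self hx))
    hp hq hpq

theorem ContinuousOn.continuousOn_primitive_Icc {f : ℝ → ℝ} {a b : ℝ} (hab : a ≤ b)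
    (hf : ContinuousOn f (Icc a b)) : ContinuousOn (fun u => ∫ t in a..u, f t) (Icc a b) := by
  have h := intervalIntegral.continuousOn_primitive_interval (μ := volume) (f := f) (a := a)
    (b := b) (by rw [uIcc_of_le hab]; exact hf.integrableOn_Icc)
  rwa [uIcc_of_le hab] at h

theorem integral_mul_exp_neg_integral {Γ : ℝ → ℝ} {a b : ℝ} (hab : a ≤ b)
    (hΓ : ContinuousOn Γ (Icc a b)) :
    ∫ s in a..b, Γ s * exp (-∫ τ in a..s, Γ τ) = 1 - exp (-∫ τ in a..b, Γ τ) := by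
  set G : ℝ → ℝ := fun u => ∫ τ in a..u, Γ τ
  have hG : ContinuousOn G (Icc a b) := hΓ.continuousOn_primitive_Icc hab
  have hG' : ∀ s ∈ Ioo a b, HasDerivAt G (Γ s) s := fun s hs =>
    intervalIntegral.integral_hasDerivAt_right
      ((hΓ.mono (Icc_subset_Icc_right hs.2.le)).intervalIntegrable_of_Icc hs.1.le)
      ((hΓ.mono Ioo_subset_Icc_self).stronglyMeasurableAtFilter isOpen_Ioo s hs)
      (hΓ.continuousAt (Icc_mem_nhds hs.1 hs.2))
  rw [intervalIntegral.integral_eq_sub_of_hasDerivAt_of_le hab (f := fun u => -exp (-G u))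
    (f' := fun s => Γ s * exp (-G s)) hG.neg.rexp.neg
    (fun s hs => ((hG' s hs).neg.exp).neg.congr_deriv (by simp only [Pi.neg_apply]; ring))
    ((hΓ.mul hG.neg.rexp).intervalIntegrable_of_Icc hab)]
  simp only [G, intervalIntegral.integral_same, neg_zero, exp_zero]
  ring

theorem exp_div_mul_rpow_one_div_rpow {a t x p : ℝ} (hx : 0 ≤ x) (hp : p ≠ 0) :
    (exp (a / p * t) * x ^ (1 / p)) ^ p = exp (a * t) * x := by
  rw [mul_rpow (exp_pos _).le (rpow_nonneg hx _), ← exp_mul, ← rpow_mul hx,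
    one_div_mul_cancel hp, rpow_one]
  congr 2
  field_simp

/-- The key Hölder-type estimate of the generalized Merton problem:
for `t̄ < T`, `β ∈ (0,1)`, `λ ∈ ℝ`, `ρ > 0`, `ν` continuous positive and `Γ`
continuous nonnegative on `[t̄, T]`,
`∫_{t̄}^T e^{λ(s-t̄)} ν(s) (Γ(s) e^{-∫_{t̄}^s Γ})^β ds + e^{λ(T-t̄)} ρ e^{-β∫_{t̄}^T Γ}
  ≤ (∫_{t̄}^T e^{(λ/(1-β))(s-t̄)} ν(s)^{1/(1-β)} ds + e^{(λ/(1-β))(T-t̄)} ρ^{1/(1-β)})^{1-β}`. -/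
theorem statement17 (tb T β lam ρ : ℝ) (htT : tb < T)
    (hβ : β ∈ Set.Ioo (0 : ℝ) 1) (hρ : 0 < ρ)
    (ν Γ : ℝ → ℝ)
    (hνc : ContinuousOn ν (Set.Icc tb T)) (hνpos : ∀ s ∈ Set.Icc tb T, 0 < ν s)
    (hΓc : ContinuousOn Γ (Set.Icc tb T)) (hΓnn : ∀ s ∈ Set.Icc tb T, 0 ≤ Γ s) :
    (∫ s in tb..T,
        Real.exp (lam * (s - tb)) * ν s
          * (Γ s * Real.exp (-∫ τ in tb..s, Γ τ)) ^ β)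
      + Real.exp (lam * (T - tb)) * ρ * Real.exp (-β * ∫ τ in tb..T, Γ τ)
    ≤ ((∫ s in tb..T,
          Real.exp (lam / (1 - β) * (s - tb)) * ν s ^ (1 / (1 - β)))
        + Real.exp (lam / (1 - β) * (T - tb)) * ρ ^ (1 / (1 - β))) ^ (1 - β) := by
  obtain ⟨hβ0, hβ1⟩ := hβ
  have h1β : 0 < 1 - β := sub_pos.2 hβ1
  set u : ℝ → ℝ := fun s => exp (lam / (1 - β) * (s - tb)) * ν s ^ (1 / (1 - β))
  set v : ℝ → ℝ := fun s => Γ s * exp (-∫ τ in tb..s, Γ τ)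
  set B := exp (lam / (1 - β) * (T - tb)) * ρ ^ (1 / (1 - β))
  set w := exp (-∫ τ in tb..T, Γ τ)
  have hu : ContinuousOn u (Icc tb T) :=
    (by fun_prop : Continuous fun s => exp (lam / (1 - β) * (s - tb))).continuousOn.mul
      (hνc.rpow_const fun _ _ => Or.inr (one_div_pos.2 h1β).le)
  have hv : ContinuousOn v (Icc tb T) :=
    hΓc.mul (hΓc.continuousOn_primitive_Icc htT.le).neg.rexp
  have hu0 : ∀ s ∈ Icc tb T, 0 ≤ u s := fun s hs =>
    mul_nonneg (exp_pos _).le (rpow_nonneg (hνpos s hs).le _)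
  have hv0 : ∀ s ∈ Icc tb T, 0 ≤ v s := fun s hs => mul_nonneg (hΓnn s hs) (exp_pos _).le
  have hintegrand : ∀ s ∈ uIcc tb T, exp (lam * (s - tb)) * ν s * v s ^ β
      = u s ^ (1 - β) * v s ^ β := fun s hs => by
    rw [exp_div_mul_rpow_one_div_rpow (hνpos s (uIcc_of_le htT.le ▸ hs)).le h1β.ne']
  have hboundary : exp (lam * (T - tb)) * ρ * exp (-β * ∫ τ in tb..T, Γ τ)
      = B ^ (1 - β) * w ^ β := by
    rw [exp_div_mul_rpow_one_div_rpow hρ.le h1β.ne', ← exp_mul, neg_mul_comm, mul_comm β]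
  have hvw : (∫ s in tb..T, v s) + w = 1 := by
    rw [integral_mul_exp_neg_integral htT.le hΓc]
    ring
  calc _ = (∫ s in tb..T, u s ^ (1 - β) * v s ^ β) + B ^ (1 - β) * w ^ β := by
        rw [intervalIntegral.integral_congr hintegrand, hboundary]
    _ ≤ (∫ s in tb..T, u s) ^ (1 - β) * (∫ s in tb..T, v s) ^ β + B ^ (1 - β) * w ^ β := by
        gcongr
        exact intervalIntegral.integral_rpow_mul_rpow_le htT.le
          (hu.intervalIntegrable_of_Icc htT.le) (hv.intervalIntegrable_of_Icc htT.le) hu0 hv0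
          h1β hβ0 (sub_add_cancel 1 β)
    _ ≤ ((∫ s in tb..T, u s) + B) ^ (1 - β) * ((∫ s in tb..T, v s) + w) ^ β :=
        rpow_mul_rpow_add_rpow_mul_rpow_le
          (intervalIntegral.integral_nonneg htT.le hu0) (intervalIntegral.integral_nonneg htT.le hv0)
          (mul_nonneg (exp_pos _).le (rpow_nonneg hρ.le _)) (exp_pos _).le
          h1β hβ0 (sub_add_cancel 1 β)
    _ = ((∫ s in tb..T, u s) + B) ^ (1 - β) := by rw [hvw, one_rpow, mul_one]
end

section
/- Let T > 0, ρ₀ > 0 and λ̄ ≥ 0, let w : [0,T] → [0,∞) be continuous, and let ẑ : [0,T] → ℝ be continuous and satisfy ẑ(t) ≥ ρ₀ + ∫_t^T e^{−λ̄(τ−t)} w(τ) ẑ(τ) dτ for all t ∈ [0,T]. Then ẑ(t) ≥ ρ₀ e^{−λ̄(T−t)} e^{∫_t^T w(s) ds} for all t ∈ [0,T]. -/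
/-- Backward Gronwall-type inequality with exponential weight:
if `ẑ` is continuous on `[0,T]` and
`ẑ(t) ≥ ρ₀ + ∫_t^T e^{-λ̄(τ-t)} w(τ) ẑ(τ) dτ` with `w` continuous nonnegative,
`ρ₀ > 0`, `λ̄ ≥ 0`, then `ẑ(t) ≥ ρ₀ e^{-λ̄(T-t)} e^{∫_t^T w(s) ds}` on `[0,T]`. -/
theorem statement19 (T ρ₀ lamb : ℝ) (hT : 0 < T) (hρ : 0 < ρ₀) (hlamb : 0 ≤ lamb)
    (w : ℝ → ℝ) (hwc : ContinuousOn w (Set.Icc 0 T))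
    (hwnn : ∀ t ∈ Set.Icc (0 : ℝ) T, 0 ≤ w t)
    (zh : ℝ → ℝ) (hzc : ContinuousOn zh (Set.Icc 0 T))
    (hineq : ∀ t ∈ Set.Icc (0 : ℝ) T,
      ρ₀ + ∫ τ in t..T, Real.exp (-lamb * (τ - t)) * w τ * zh τ ≤ zh t) :
    ∀ t ∈ Set.Icc (0 : ℝ) T,
      ρ₀ * Real.exp (-lamb * (T - t)) * Real.exp (∫ s in t..T, w s) ≤ zh t := by
  have huIcc : Set.uIcc (0:ℝ) T = Set.Icc 0 T := Set.uIcc_of_le hT.le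
  set f : ℝ → ℝ := fun τ => Real.exp (-lamb * τ) * w τ * zh τ with hf
  have hfc : ContinuousOn f (Set.Icc 0 T) := by
    exact (((Real.continuous_exp.comp (continuous_const.mul continuous_id)).continuousOn).mul
      hwc).mul hzc
  set F : ℝ → ℝ := fun t => ∫ τ in t..T, f τ with hF
  set W : ℝ → ℝ := fun t => ∫ s in t..T, w s with hW
  set C : ℝ := ρ₀ * Real.exp (-lamb * T) with hC
  have hCpos : 0 < C := mul_pos hρ (Real.exp_pos _)
  -- integrabilities
  have hfint : MeasureTheory.IntegrableOn f (Set.uIcc 0 T) := by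
    rw [huIcc]; exact hfc.integrableOn_Icc
  have hwint : MeasureTheory.IntegrableOn w (Set.uIcc 0 T) := by
    rw [huIcc]; exact hwc.integrableOn_Icc
  -- continuity of F and W
  have hFc : ContinuousOn F (Set.Icc 0 T) := by
    rw [← huIcc]; exact intervalIntegral.continuousOn_primitive_interval_left hfint
  have hWc : ContinuousOn W (Set.Icc 0 T) := by
    rw [← huIcc]; exact intervalIntegral.continuousOn_primitive_interval_left hwint
  -- the hypothesis rewritten: zh t ≥ ρ₀ + exp(lamb t) * F t
  have hkey : ∀ t ∈ Set.Icc (0:ℝ) T, ρ₀ + Real.exp (lamb * t) * F t ≤ zh t := by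
    intro t ht
    have h2 : (∫ τ in t..T, Real.exp (-lamb * (τ - t)) * w τ * zh τ)
        = Real.exp (lamb * t) * F t := by
      rw [hF]
      simp only
      rw [← intervalIntegral.integral_const_mul]
      apply intervalIntegral.integral_congr
      intro τ _
      simp only [hf]
      rw [show -lamb * (τ - t) = lamb * t + -lamb * τ by ring, Real.exp_add]
      ring
    have h1 := hineq t ht
    rw [h2] at h1
    exact h1
  -- derivatives on the interior
  have hmeasf : ∀ x ∈ Set.Ioo (0:ℝ) T,
      StronglyMeasurableAtFilter f (nhds x) MeasureTheory.volume :=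
    (hfc.mono Set.Ioo_subset_Icc_self).stronglyMeasurableAtFilter isOpen_Ioo
  have hmeasw : ∀ x ∈ Set.Ioo (0:ℝ) T,
      StronglyMeasurableAtFilter w (nhds x) MeasureTheory.volume :=
    (hwc.mono Set.Ioo_subset_Icc_self).stronglyMeasurableAtFilter isOpen_Ioo
  have hFd : ∀ x ∈ Set.Ioo (0:ℝ) T, HasDerivAt F (-f x) x := by
    intro x hx
    have hmem : Set.Icc (0:ℝ) T ∈ nhds x := Icc_mem_nhds hx.1 hx.2
    have hca : ContinuousAt f x := hfc.continuousAt hmem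
    have hint : IntervalIntegrable f MeasureTheory.volume x T :=
      (hfc.mono (by rw [Set.uIcc_of_le hx.2.le]; exact
        Set.Icc_subset_Icc hx.1.le le_rfl)).intervalIntegrable
    exact intervalIntegral.integral_hasDerivAt_left hint (hmeasf x hx) hca
  have hWd : ∀ x ∈ Set.Ioo (0:ℝ) T, HasDerivAt W (-w x) x := by
    intro x hx
    have hmem : Set.Icc (0:ℝ) T ∈ nhds x := Icc_mem_nhds hx.1 hx.2
    have hca : ContinuousAt w x := hwc.continuousAt hmem
    have hint : IntervalIntegrable w MeasureTheory.volume x T :=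
      (hwc.mono (by rw [Set.uIcc_of_le hx.2.le]; exact
        Set.Icc_subset_Icc hx.1.le le_rfl)).intervalIntegrable
    exact intervalIntegral.integral_hasDerivAt_left hint (hmeasw x hx) hca
  -- the auxiliary function φ
  set φ : ℝ → ℝ := fun t => (F t + C) * Real.exp (-(W t)) with hφ
  have hφd : ∀ x ∈ Set.Ioo (0:ℝ) T,
      HasDerivAt φ ((-f x) * Real.exp (-(W x)) + (F x + C) * (Real.exp (-(W x)) * w x)) x := by
    intro x hx
    have h1 : HasDerivAt (fun t => F t + C) (-f x) x := (hFd x hx).add_const C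
    have h2 : HasDerivAt (fun t => Real.exp (-(W t))) (Real.exp (-(W x)) * w x) x := by
      have := ((hWd x hx).neg).exp
      simpa using this
    exact h1.mul h2
  have hφderiv_nonpos : ∀ x ∈ Set.Ioo (0:ℝ) T, deriv φ x ≤ 0 := by
    intro x hx
    rw [(hφd x hx).deriv]
    have hxIcc : x ∈ Set.Icc (0:ℝ) T := Set.Ioo_subset_Icc_self hx
    have hwx : 0 ≤ w x := hwnn x hxIcc
    have hzx := hkey x hxIcc
    -- F x + C ≤ exp(-lamb x) * zh x
    have hFC : F x + C ≤ Real.exp (-lamb * x) * zh x := by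
      have hee : Real.exp (-lamb * T) ≤ Real.exp (-lamb * x) := by
        apply Real.exp_le_exp.2
        nlinarith [hxIcc.2]
      have h3 : Real.exp (-lamb * x) * (ρ₀ + Real.exp (lamb * x) * F x)
          ≤ Real.exp (-lamb * x) * zh x :=
        mul_le_mul_of_nonneg_left hzx (Real.exp_pos _).le
      have h4 : Real.exp (-lamb * x) * Real.exp (lamb * x) = 1 := by
        rw [← Real.exp_add]; simp
      rw [mul_add, ← mul_assoc, h4, one_mul] at h3
      have h5 : C ≤ Real.exp (-lamb * x) * ρ₀ := by
        rw [hC]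
        nlinarith [mul_le_mul_of_nonneg_left hee hρ.le]
      linarith
    have hfx : w x * (F x + C) ≤ f x := by
      simp only [hf]
      calc w x * (F x + C) ≤ w x * (Real.exp (-lamb * x) * zh x) :=
            mul_le_mul_of_nonneg_left hFC hwx
        _ = Real.exp (-lamb * x) * w x * zh x := by ring
    have hep : (0:ℝ) < Real.exp (-(W x)) := Real.exp_pos _
    nlinarith [hep, hfx]
  have hφc : ContinuousOn φ (Set.Icc 0 T) :=
    (hFc.add continuousOn_const).mul (Real.continuous_exp.comp_continuousOn hWc.neg)
  have hφdiff : DifferentiableOn ℝ φ (interior (Set.Icc (0:ℝ) T)) := by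
    rw [interior_Icc]
    exact fun x hx => ((hφd x hx).differentiableAt).differentiableWithinAt
  have hanti : AntitoneOn φ (Set.Icc 0 T) := by
    apply antitoneOn_of_deriv_nonpos (convex_Icc 0 T) hφc hφdiff
    intro x hx
    rw [interior_Icc] at hx
    exact hφderiv_nonpos x hx
  -- conclude
  intro t ht
  have hφT : φ T = C := by
    simp only [hφ, hF, hW, intervalIntegral.integral_same]
    simp
  have hφt : C ≤ φ t := by
    have := hanti ht (Set.right_mem_Icc.2 hT.le) ht.2
    rw [hφT] at this
    exact this
  -- F t ≥ C * exp (W t) - C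
  have hexpW : (0:ℝ) < Real.exp (W t) := Real.exp_pos _
  have hFt : C * Real.exp (W t) - C ≤ F t := by
    have h5 : C * Real.exp (W t) ≤ (F t + C) * Real.exp (-(W t)) * Real.exp (W t) :=
      mul_le_mul_of_nonneg_right hφt hexpW.le
    have h6 : Real.exp (-(W t)) * Real.exp (W t) = 1 := by
      rw [← Real.exp_add]; simp
    rw [mul_assoc (F t + C), h6, mul_one] at h5
    linarith
  have hzt := hkey t ht
  have hel : Real.exp (-lamb * (T - t)) = Real.exp (lamb * t) * Real.exp (-lamb * T) := by
    rw [← Real.exp_add]; ring_nf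
  have hele : Real.exp (-lamb * (T - t)) ≤ 1 := by
    apply Real.exp_le_one_iff.2
    nlinarith [ht.2]
  have hepos : (0:ℝ) < Real.exp (lamb * t) := Real.exp_pos _
  have h7 : Real.exp (lamb * t) * (C * Real.exp (W t) - C) ≤ Real.exp (lamb * t) * F t :=
    mul_le_mul_of_nonneg_left hFt hepos.le
  have h8 : Real.exp (lamb * t) * C = ρ₀ * Real.exp (-lamb * (T - t)) := by
    rw [hel, hC]; ring
  have goal_eq : ρ₀ * Real.exp (-lamb * (T - t)) * Real.exp (W t)
      = Real.exp (lamb * t) * (C * Real.exp (W t)) := by rw [← h8]; ring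
  have : ρ₀ * Real.exp (-lamb * (T - t)) * Real.exp (W t)
      - ρ₀ * Real.exp (-lamb * (T - t)) ≤ Real.exp (lamb * t) * F t := by
    calc ρ₀ * Real.exp (-lamb * (T - t)) * Real.exp (W t) - ρ₀ * Real.exp (-lamb * (T - t))
        = Real.exp (lamb * t) * (C * Real.exp (W t) - C) := by rw [goal_eq, ← h8]; ring
      _ ≤ Real.exp (lamb * t) * F t := h7
    
  have hfinal : ρ₀ * Real.exp (-lamb * (T - t)) * Real.exp (W t) ≤ zh t := by
    nlinarith [this, hzt, mul_le_mul_of_nonneg_left hele hρ.le]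
  exact hfinal
end
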